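/- Let f ∈ (0,1) and κ, γ₁, γ₂, γ₃ > 0, and let u* ∈ [0,1]⁴ be a steady state of the ZIP regulatory system. Then for every real λ ≥ −1 one has det(λ·I − J(u*)) > 0; in particular, every real eigenvalue λ of the Jacobian J(u*) satisfies λ < −1. -/

import Mathlib

/-!
Write `s = λ + 1`, with indices as in the paper (`u₁` is `u 0`). Expanding along the first row,
`det (λ I - J(u))` equals
`(s + κ u₃²) · s · (s² + s (γ₁u₄ + γ₂u₂ + γ₃u₃) + γ₁γ₂u₂u₄) + 2 f κ γ₁ γ₂ u₃² (1 - u₁)(1 - u₄)`.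
For `s ≥ 0` and `u ≥ 0` the first summand is nonnegative, and the steady-state equations,
rewritten as `(1 - u₁)(1 + κu₃²) = 1`, `u₃(1 + γ₁u₄) = 1` and `(1 - u₄)(1 + γ₂u₂ + γ₃u₃) = 1 + γ₃u₃`,
force `u₁ < 1`, `u₃ > 0` and `u₄ < 1`, so the second summand is positive.
-/

/-- The ZIP regulatory vector field on ℝ⁴ (components indexed by `Fin 4`). -/
noncomputable def zipField (κ γ₁ γ₂ γ₃ f : ℝ) (u : Fin 4 → ℝ) : Fin 4 → ℝ :=
  ![κ * (u 2) ^ 2 * (1 - u 0) - u 0,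
    u 0 * f - u 1,
    1 - γ₁ * u 2 * u 3 - u 2,
    γ₂ * u 1 - γ₃ * u 2 * u 3 - (1 + γ₂ * u 1) * u 3]

/-- The Jacobian matrix of the ZIP regulatory vector field at a point u. -/
noncomputable def zipJacobian (κ γ₁ γ₂ γ₃ f : ℝ) (u : Fin 4 → ℝ) :
    Matrix (Fin 4) (Fin 4) ℝ :=
  !![-(κ * (u 2) ^ 2) - 1, 0, 2 * κ * u 2 * (1 - u 0), 0;
     f, -1, 0, 0;
     0, 0, -(γ₁ * u 3) - 1, -(γ₁ * u 2);
     0, γ₂ * (1 - u 3), -(γ₃ * u 3), -(γ₃ * u 2) - 1 - γ₂ * u 1]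

theorem zipField_eq_zero_iff {κ γ₁ γ₂ γ₃ f : ℝ} {u : Fin 4 → ℝ} :
    zipField κ γ₁ γ₂ γ₃ f u = 0 ↔
      κ * u 2 ^ 2 * (1 - u 0) - u 0 = 0 ∧ u 0 * f - u 1 = 0 ∧ 1 - γ₁ * u 2 * u 3 - u 2 = 0 ∧
        γ₂ * u 1 - γ₃ * u 2 * u 3 - (1 + γ₂ * u 1) * u 3 = 0 := by
  simp [zipField, funext_iff, Fin.forall_fin_succ]

theorem det_smul_one_sub_zipJacobian (κ γ₁ γ₂ γ₃ f lam : ℝ) (u : Fin 4 → ℝ) :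
    (lam • (1 : Matrix (Fin 4) (Fin 4) ℝ) - zipJacobian κ γ₁ γ₂ γ₃ f u).det =
      (lam + 1 + κ * u 2 ^ 2) * (lam + 1) *
          ((lam + 1) ^ 2 + (lam + 1) * (γ₁ * u 3 + γ₂ * u 1 + γ₃ * u 2) + γ₁ * γ₂ * u 1 * u 3) +
        2 * f * κ * γ₁ * γ₂ * u 2 ^ 2 * (1 - u 0) * (1 - u 3) := by
  rw [Matrix.det_succ_row_zero]
  simp [Fin.sum_univ_succ, zipJacobian, Matrix.det_fin_three, Matrix.one_apply, Fin.succAbove]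
  ring

namespace ZipSteadyState

variable {κ γ₁ γ₂ γ₃ f : ℝ} {u : Fin 4 → ℝ}

theorem one_sub_u0_pos (hsteady : zipField κ γ₁ γ₂ γ₃ f u = 0) (hκ : 0 ≤ κ) : 0 < 1 - u 0 := by
  have h : (1 - u 0) * (1 + κ * u 2 ^ 2) = 1 := by
    linear_combination (zipField_eq_zero_iff.mp hsteady).1
  exact pos_of_mul_pos_left (h ▸ one_pos) (by positivity)

theorem u2_pos (hsteady : zipField κ γ₁ γ₂ γ₃ f u = 0) (hγ₁u3 : 0 ≤ γ₁ * u 3) : 0 < u 2 := by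
  have h : u 2 * (1 + γ₁ * u 3) = 1 := by
    linear_combination -(zipField_eq_zero_iff.mp hsteady).2.2.1
  exact pos_of_mul_pos_left (h ▸ one_pos) (by positivity)

theorem one_sub_u3_pos (hsteady : zipField κ γ₁ γ₂ γ₃ f u = 0) (hγ₂u1 : 0 ≤ γ₂ * u 1)
    (hγ₃u2 : 0 ≤ γ₃ * u 2) : 0 < 1 - u 3 := by
  have h : (1 - u 3) * (1 + γ₂ * u 1 + γ₃ * u 2) = 1 + γ₃ * u 2 := by
    linear_combination (zipField_eq_zero_iff.mp hsteady).2.2.2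
  have hpos : 0 < 1 + γ₃ * u 2 := by positivity
  exact pos_of_mul_pos_left (h ▸ hpos) (by positivity)

theorem det_smul_one_sub_zipJacobian_pos (hsteady : zipField κ γ₁ γ₂ γ₃ f u = 0)
    (hκ : 0 < κ) (hγ₁ : 0 < γ₁) (hγ₂ : 0 < γ₂) (hγ₃ : 0 < γ₃) (hf : 0 < f)
    (hu1 : 0 ≤ u 1) (hu3 : 0 ≤ u 3) {lam : ℝ} (hlam : -1 ≤ lam) :
    0 < (lam • (1 : Matrix (Fin 4) (Fin 4) ℝ) - zipJacobian κ γ₁ γ₂ γ₃ f u).det := by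
  have hu2 : 0 < u 2 := u2_pos hsteady (by positivity)
  have hu0' : 0 < 1 - u 0 := one_sub_u0_pos hsteady hκ.le
  have hu3' : 0 < 1 - u 3 := one_sub_u3_pos hsteady (by positivity) (by positivity)
  have hs : 0 ≤ lam + 1 := by linarith
  rw [det_smul_one_sub_zipJacobian]
  generalize lam + 1 = s at hs ⊢
  positivity

end ZipSteadyState

/-- at a steady state in [0,1]⁴, det(λI − J) > 0 for every real
λ ≥ −1; in particular every real eigenvalue of the Jacobian is < −1. -/
theorem zip_real_eigenvalues_lt_neg_one
    (κ γ₁ γ₂ γ₃ f : ℝ) (hκ : 0 < κ) (hγ₁ : 0 < γ₁) (hγ₂ : 0 < γ₂) (hγ₃ : 0 < γ₃)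
    (hf : f ∈ Set.Ioo (0 : ℝ) 1)
    (u : Fin 4 → ℝ) (hu : ∀ i, u i ∈ Set.Icc (0 : ℝ) 1)
    (hsteady : zipField κ γ₁ γ₂ γ₃ f u = 0) :
    (∀ lam : ℝ, -1 ≤ lam →
      0 < (lam • (1 : Matrix (Fin 4) (Fin 4) ℝ) - zipJacobian κ γ₁ γ₂ γ₃ f u).det) ∧
    (∀ lam : ℝ,
      (lam • (1 : Matrix (Fin 4) (Fin 4) ℝ) - zipJacobian κ γ₁ γ₂ γ₃ f u).det = 0 →
      lam < -1) := by
  have hdet_pos : ∀ lam : ℝ, -1 ≤ lam →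
      0 < (lam • (1 : Matrix (Fin 4) (Fin 4) ℝ) - zipJacobian κ γ₁ γ₂ γ₃ f u).det :=
    fun _ hlam => ZipSteadyState.det_smul_one_sub_zipJacobian_pos hsteady hκ hγ₁ hγ₂ hγ₃ hf.1
      (hu 1).1 (hu 3).1 hlam
  exact ⟨hdet_pos, fun lam hdet => lt_of_not_ge fun hlam => (hdet_pos lam hlam).ne' hdet⟩
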